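/- A collection 𝒞 of pairwise incomparable nonempty subsets of a finite set E is the set of circuits of a matroid on E if (and only if) the elimination property ℰ(A, B, 𝒞) holds for all modular pairs A, B ∈ 𝒞. -/

import Mathlib

/-!
If distinct members `A, B` of `𝒞` do not form a modular pair, a chain of length `3` below `A ∪ B`
yields `D ∈ 𝒞` and a union `Z` of members of `𝒞` with `D ⊂ Z ⊂ A ∪ B`, and some member `F ⊆ Z` is
not contained in `D`. Eliminating `e ∈ A ∩ B` from `A ∪ B` then reduces to eliminating it from the
strictly smaller union `D ∪ F`, so induction on `|A ∪ B|` upgrades elimination for modular pairs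
to elimination for all pairs of distinct members. These are the classical circuit axioms: the sets
containing no member of `𝒞` satisfy the augmentation axiom by the usual exchange argument.
Conversely, the two members of a modular pair are distinct, and circuits of a matroid satisfy
elimination.
-/

open Set

variable {α : Type*}

/-- The set `U(𝒞)` of all unions of subfamilies of `𝒞`, as a set of sets
(ordered by inclusion). -/
def unionsOf (𝒞 : Set (Set α)) : Set (Set α) := {Z | ∃ 𝒯 ⊆ 𝒞, Z = ⋃₀ 𝒯}

/-- There is a strictly increasing chain of `n + 1` elements of `U`,
all contained in `Z` (i.e. a chain of length `n` in `U_{≤ Z}`). -/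
def HasChainBelow (U : Set (Set α)) (Z : Set α) (n : ℕ) : Prop :=
  ∃ c : Fin (n + 1) → Set α, StrictMono c ∧ ∀ i, c i ∈ U ∧ c i ⊆ Z

/-- The maximal length of a chain in `U_{≤ Z}` is exactly `n`. -/
def LengthBelowEq (U : Set (Set α)) (Z : Set α) (n : ℕ) : Prop :=
  HasChainBelow U Z n ∧ ¬ HasChainBelow U Z (n + 1)

/-- `A, B ∈ 𝒞` are a modular pair: the interval below `A ∪ B` in the lattice
`U(𝒞)` of unions of members of `𝒞` has length `2`. -/
def IsModularPair (𝒞 : Set (Set α)) (A B : Set α) : Prop :=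
  LengthBelowEq (unionsOf 𝒞) (A ∪ B) 2

/-- The elimination property `ℰ(A, B, 𝒞)`. -/
def Elim (𝒞 : Set (Set α)) (A B : Set α) : Prop :=
  ∀ e ∈ A ∩ B, ∃ C ∈ 𝒞, C ⊆ (A ∪ B) \ {e}

/-- The members of `𝒞` are pairwise incomparable under inclusion. -/
def PairwiseIncomparable (𝒞 : Set (Set α)) : Prop :=
  ∀ A ∈ 𝒞, ∀ B ∈ 𝒞, A ⊆ B → A = B

/-- `𝒞` is the set of circuits of a matroid with ground set `E`
(circuits = minimal dependent sets). -/
def IsCircuitSetOf (𝒞 : Set (Set α)) (E : Set α) : Prop :=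
  ∃ M : Matroid α, M.E = E ∧ ∀ C : Set α, Minimal M.Dep C ↔ C ∈ 𝒞

section Chains

variable {U : Set (Set α)} {X Y Z : Set α} {n : ℕ}

lemma hasChainBelow_two (hX : X ∈ U) (hY : Y ∈ U) (hZ : Z ∈ U) (hXY : X ⊂ Y) (hYZ : Y ⊂ Z) :
    HasChainBelow U Z 2 := by
  refine ⟨![X, Y, Z], Fin.strictMono_iff_lt_succ.2 ?_, ?_⟩
  · simp [Fin.forall_fin_two, hXY, hYZ]
  · simp [Fin.forall_fin_succ, hX, hY, hZ, hXY.subset.trans hYZ.subset, hYZ.subset]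

lemma HasChainBelow.exists_ssubset (h : HasChainBelow U Z (n + 1)) :
    ∃ Y ∈ U, Y ⊂ Z ∧ HasChainBelow U Y n := by
  obtain ⟨c, hc, hcU⟩ := h
  refine ⟨c (Fin.last n).castSucc, (hcU _).1,
    (hc (Fin.castSucc_lt_last _)).trans_le (hcU _).2,
    c ∘ Fin.castSucc, hc.comp Fin.strictMono_castSucc, fun i ↦ ⟨(hcU _).1, ?_⟩⟩
  exact hc.monotone (Fin.castSucc_le_castSucc_iff.2 (Fin.le_last i))

end Chains

section Unions

variable {𝒞 : Set (Set α)} {Z : Set α}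

lemma mem_unionsOf_of_mem (h : Z ∈ 𝒞) : Z ∈ unionsOf 𝒞 :=
  ⟨{Z}, by simpa, by simp⟩

lemma union_mem_unionsOf {A B : Set α} (hA : A ∈ 𝒞) (hB : B ∈ 𝒞) : A ∪ B ∈ unionsOf 𝒞 :=
  ⟨{A, B}, by simp [insert_subset_iff, hA, hB], by simp⟩

lemma exists_mem_subset_not_subset_of_ssubset {D : Set α} (hZ : Z ∈ unionsOf 𝒞) (hDZ : D ⊂ Z) :
    ∃ F ∈ 𝒞, F ⊆ Z ∧ ¬ F ⊆ D := by
  obtain ⟨𝒯, h𝒯, rfl⟩ := hZ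
  by_contra! h
  exact hDZ.not_subset (sUnion_subset fun F hF ↦ h F (h𝒯 hF) (subset_sUnion_of_mem hF))

lemma exists_mem_ssubset_of_hasChainBelow_two (h : HasChainBelow (unionsOf 𝒞) Z 2) :
    ∃ D ∈ 𝒞, D ⊂ Z := by
  obtain ⟨Y, -, hYZ, c, hc, hcY⟩ := h.exists_ssubset
  obtain ⟨F, hF, hFc, -⟩ := exists_mem_subset_not_subset_of_ssubset (hcY 1).1 (hc Fin.zero_lt_one)
  exact ⟨F, hF, (hFc.trans (hcY 1).2).trans_ssubset hYZ⟩

end Unions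

section ModularPairs

variable {𝒞 : Set (Set α)} {A B : Set α}

lemma ne_of_isModularPair (hinc : PairwiseIncomparable 𝒞) (hA : A ∈ 𝒞) (h : IsModularPair 𝒞 A B) :
    A ≠ B := by
  rintro rfl
  obtain ⟨D, hD, hDA⟩ := exists_mem_ssubset_of_hasChainBelow_two (by simpa using h.1)
  exact hDA.ne (hinc D hD A hA hDA.subset)

lemma exists_mem_ssubset_ssubset_of_not_isModularPair (hne : ∀ C ∈ 𝒞, C.Nonempty)
    (hinc : PairwiseIncomparable 𝒞) (hA : A ∈ 𝒞) (hB : B ∈ 𝒞) (hAB : A ≠ B)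
    (h : ¬ IsModularPair 𝒞 A B) : ∃ D ∈ 𝒞, ∃ Z ∈ unionsOf 𝒞, D ⊂ Z ∧ Z ⊂ A ∪ B := by
  have hA_ssubset : A ⊂ A ∪ B := subset_union_left.ssubset_of_ne fun hAB' ↦
    hAB (hinc B hB A hA (hAB' ▸ subset_union_right)).symm
  have h2 : HasChainBelow (unionsOf 𝒞) (A ∪ B) 2 :=
    hasChainBelow_two ⟨∅, empty_subset _, sUnion_empty.symm⟩ (mem_unionsOf_of_mem hA)
      (union_mem_unionsOf hA hB) (hne A hA).empty_ssubset hA_ssubset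
  obtain ⟨Z, hZ, hZAB, hZ2⟩ := (not_not.1 (not_and.1 h h2)).exists_ssubset
  obtain ⟨D, hD, hDZ⟩ := exists_mem_ssubset_of_hasChainBelow_two hZ2
  exact ⟨D, hD, Z, hZ, hDZ, hZAB⟩

end ModularPairs

lemma elim_of_forall_isModularPair_elim {𝒞 : Set (Set α)} (hfin : ∀ C ∈ 𝒞, C.Finite)
    (hne : ∀ C ∈ 𝒞, C.Nonempty) (hinc : PairwiseIncomparable 𝒞)
    (hmod : ∀ A ∈ 𝒞, ∀ B ∈ 𝒞, IsModularPair 𝒞 A B → Elim 𝒞 A B) {A B : Set α}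
    (hA : A ∈ 𝒞) (hB : B ∈ 𝒞) (hAB : A ≠ B) : Elim 𝒞 A B := by
  induction hn : (A ∪ B).ncard using Nat.strong_induction_on generalizing A B with
  | _ n ih =>
  by_cases hm : IsModularPair 𝒞 A B
  · exact hmod A hA B hB hm
  obtain ⟨D, hD, Z, hZ, hDZ, hZAB⟩ :=
    exists_mem_ssubset_ssubset_of_not_isModularPair hne hinc hA hB hAB hm
  obtain ⟨F, hF, hFZ, hFD⟩ := exists_mem_subset_not_subset_of_ssubset hZ hDZ
  intro e he
  by_cases heD : e ∈ D
  swap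
  · exact ⟨D, hD, subset_sdiff_singleton (hDZ.subset.trans hZAB.subset) heD⟩
  by_cases heF : e ∈ F
  swap
  · exact ⟨F, hF, subset_sdiff_singleton (hFZ.trans hZAB.subset) heF⟩
  have hDF : D ∪ F ⊂ A ∪ B := (union_subset hDZ.subset hFZ).trans_ssubset hZAB
  obtain ⟨C, hC, hCDF⟩ := ih _ (hn ▸ ncard_lt_ncard hDF ((hfin A hA).union (hfin B hB))) hD hF
    (by rintro rfl; exact hFD subset_rfl) rfl e ⟨heD, heF⟩
  exact ⟨C, hC, hCDF.trans (sdiff_subset_sdiff_left hDF.subset)⟩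

def IndepOf (E : Set α) (𝒞 : Set (Set α)) (I : Set α) : Prop :=
  I ⊆ E ∧ ∀ C ∈ 𝒞, ¬ C ⊆ I

section IndepOf

variable {E : Set α} {𝒞 : Set (Set α)} {I J : Set α}

lemma IndepOf.subset (hJ : IndepOf E 𝒞 J) (hIJ : I ⊆ J) : IndepOf E 𝒞 I :=
  ⟨hIJ.trans hJ.1, fun C hC hCI ↦ hJ.2 C hC (hCI.trans hIJ)⟩

lemma IndepOf.exists_exchange (helim : ∀ A ∈ 𝒞, ∀ B ∈ 𝒞, A ≠ B → Elim 𝒞 A B)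
    (hI : IndepOf E 𝒞 I) (hJ : IndepOf E 𝒞 J) {f : α} (hfI : f ∈ I) (hfJ : f ∉ J)
    (hJI : (J \ I).Nonempty) : ∃ g ∈ J \ I, IndepOf E 𝒞 (insert f (J \ {g})) := by
  by_contra! hdep
  have hcirc : ∀ g ∈ J \ I, ∃ C ∈ 𝒞, C ⊆ insert f (J \ {g}) ∧ f ∈ C := by
    intro g hg
    have hE : insert f (J \ {g}) ⊆ E := insert_subset (hI.1 hfI) (sdiff_subset.trans hJ.1)
    obtain ⟨C, hC, hCs⟩ : ∃ C ∈ 𝒞, C ⊆ insert f (J \ {g}) := by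
      simpa [IndepOf, hE] using hdep g hg
    refine ⟨C, hC, hCs, by_contra fun hfC ↦ hJ.2 C hC ?_⟩
    exact ((subset_insert_iff_of_notMem hfC).1 hCs).trans sdiff_subset
  -- The members found for `g` and for some `h ∈ C \ I` differ; eliminating `f` lands inside `J`.
  obtain ⟨g, hg⟩ := hJI
  obtain ⟨C, hC, hCs, hfC⟩ := hcirc g hg
  obtain ⟨h, hhC, hhI⟩ := not_subset.1 fun hCI ↦ hI.2 C hC hCI
  have hhJ : h ∈ J \ {g} :=
    (mem_insert_iff.1 (hCs hhC)).resolve_left (by rintro rfl; exact hhI hfI)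
  obtain ⟨C', hC', hC's, hfC'⟩ := hcirc h ⟨hhJ.1, hhI⟩
  have hCC' : C ≠ C' := by
    rintro rfl
    obtain rfl | ⟨-, hnh⟩ := hC's hhC
    · exact hhI hfI
    · exact hnh rfl
  obtain ⟨C'', hC'', hC''s⟩ := helim C hC C' hC' hCC' f ⟨hfC, hfC'⟩
  refine hJ.2 C'' hC'' (hC''s.trans ?_)
  rw [union_sdiff_distrib]
  exact union_subset ((sdiff_singleton_subset_iff.2 hCs).trans sdiff_subset)
    ((sdiff_singleton_subset_iff.2 hC's).trans sdiff_subset)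

lemma IndepOf.exists_insert_of_ncard_lt (hE : E.Finite)
    (helim : ∀ A ∈ 𝒞, ∀ B ∈ 𝒞, A ≠ B → Elim 𝒞 A B) (hI : IndepOf E 𝒞 I) (hJ : IndepOf E 𝒞 J)
    (hIJ : I.ncard < J.ncard) : ∃ e ∈ J, e ∉ I ∧ IndepOf E 𝒞 (insert e I) := by
  induction hn : (I \ J).ncard using Nat.strong_induction_on generalizing J with
  | _ n ih =>
  have hIfin : I.Finite := hE.subset hI.1
  obtain ⟨e, heJ, heI⟩ := exists_mem_notMem_of_ncard_lt_ncard hIJ hIfin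
  by_cases hIJsub : I ⊆ J
  · exact ⟨e, heJ, heI, hJ.subset (insert_subset heJ hIJsub)⟩
  obtain ⟨f, hfI, hfJ⟩ := not_subset.1 hIJsub
  -- Exchanging some `g ∈ J \ I` for `f` keeps `|J|` and shrinks `I \ J`.
  obtain ⟨g, hg, hJ'⟩ := hI.exists_exchange helim hJ hfI hfJ ⟨e, heJ, heI⟩
  have hssub : I \ insert f (J \ {g}) ⊂ I \ J := by
    refine ssubset_iff_of_subset ?_ |>.2 ⟨f, ⟨hfI, hfJ⟩, fun h ↦ h.2 (mem_insert f _)⟩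
    rintro x ⟨hxI, hx⟩
    refine ⟨hxI, fun hxJ ↦ hx (mem_insert_of_mem _ ⟨hxJ, ?_⟩)⟩
    rintro rfl
    exact hg.2 hxI
  obtain ⟨e', he'J', he'I, hins⟩ := ih _ (hn ▸ ncard_lt_ncard hssub hIfin.sdiff) hJ'
    (by rwa [ncard_exchange hfJ hg.1]) rfl
  exact ⟨e', ((mem_insert_iff.1 he'J').resolve_left (by rintro rfl; exact he'I hfI)).1, he'I, hins⟩

end IndepOf

lemma isCircuitSetOf_of_elim {E : Set α} (hE : E.Finite) {𝒞 : Set (Set α)}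
    (hsub : ∀ C ∈ 𝒞, C ⊆ E) (hne : ∀ C ∈ 𝒞, C.Nonempty) (hinc : PairwiseIncomparable 𝒞)
    (helim : ∀ A ∈ 𝒞, ∀ B ∈ 𝒞, A ≠ B → Elim 𝒞 A B) : IsCircuitSetOf 𝒞 E := by
  let M : Matroid α := (IndepMatroid.ofFinite hE (IndepOf E 𝒞)
    ⟨empty_subset E, fun C hC h ↦ (hne C hC).ne_empty (subset_empty_iff.1 h)⟩
    (fun _ _ hJ hIJ ↦ hJ.subset hIJ)
    (fun _ _ hI hJ hIJ ↦ hI.exists_insert_of_ncard_lt hE helim hJ hIJ)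
    (fun _ hI ↦ hI.1)).matroid
  refine ⟨M, rfl, fun C ↦ ?_⟩
  change M.IsCircuit C ↔ C ∈ 𝒞
  simp only [Matroid.isCircuit_iff_forall_ssubset, Matroid.dep_iff]
  constructor
  · rintro ⟨⟨hCdep, hCE⟩, hssub⟩
    obtain ⟨C', hC', hC'C⟩ : ∃ C' ∈ 𝒞, C' ⊆ C := by
      by_contra! h
      exact hCdep ⟨hCE, h⟩
    obtain rfl | hlt := hC'C.eq_or_ssubset
    · exact hC'
    · exact ((hssub hlt).2 C' hC' subset_rfl).elim
  · intro hC
    refine ⟨⟨fun h ↦ h.2 C hC subset_rfl, hsub C hC⟩,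
      fun I hIC ↦ ⟨hIC.subset.trans (hsub C hC), fun C' hC' hC'I ↦ ?_⟩⟩
    obtain rfl := hinc C' hC' C hC (hC'I.trans hIC.subset)
    exact hIC.not_subset hC'I

lemma IsCircuitSetOf.elim {𝒞 : Set (Set α)} {E A B : Set α} (h : IsCircuitSetOf 𝒞 E)
    (hA : A ∈ 𝒞) (hB : B ∈ 𝒞) (hAB : A ≠ B) : Elim 𝒞 A B := by
  obtain ⟨M, -, hM⟩ := h
  intro e _
  obtain ⟨C, hCs, hC⟩ :=
    Matroid.IsCircuit.elimination ((hM A).2 hA) ((hM B).2 hB) hAB e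
  exact ⟨C, (hM C).1 hC, hCs⟩

/-- **Corollary.** A collection of pairwise incomparable nonempty subsets of a
finite set `E` is the set of circuits of a matroid on `E` if (and only if)
elimination holds for all modular pairs. -/
theorem circuitSet_iff_modular_elim (E : Set α) (hE : E.Finite)
    (𝒞 : Set (Set α)) (hsub : ∀ C ∈ 𝒞, C ⊆ E)
    (hne : ∀ C ∈ 𝒞, C.Nonempty)
    (hinc : PairwiseIncomparable 𝒞) :
    IsCircuitSetOf 𝒞 E ↔
      ∀ A ∈ 𝒞, ∀ B ∈ 𝒞, IsModularPair 𝒞 A B → Elim 𝒞 A B := by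
  refine ⟨fun h A hA B hB hm ↦ h.elim hA hB (ne_of_isModularPair hinc hA hm), fun hmod ↦ ?_⟩
  refine isCircuitSetOf_of_elim hE hsub hne hinc fun A hA B hB hAB ↦ ?_
  exact elim_of_forall_isModularPair_elim (fun C hC ↦ hE.subset (hsub C hC)) hne hinc hmod
    hA hB hAB
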